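/- arXiv:1302.2329 — 7 statements merged into one kernel-verified Lean document; each statement's English description precedes it below -/
import Mathlib

section
/- Let n ≥ 1 and let Γ : U → (Fin n → Fin n → Fin n → ℝ) be connection coefficients on an open set U ⊆ ℝⁿ, symmetric in the lower indices (Γ^i_{jk} = Γ^i_{kj}), and let ψ : U → (Fin n → ℝ) be any family of covector components. Then the connection coefficients Γ'^i_{jk} = Γ^i_{jk} + δ^i_j ψ_k + δ^i_k ψ_j have the same Thomas symbol as Γ: Π^i_{jk}(Γ') = Π^i_{jk}(Γ) at every point of U and for all indices i,j,k. -/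
open scoped BigOperators

/-- Partial derivative of `f` in the `k`-th coordinate direction at the point `x`. -/
noncomputable def pd {n : ℕ} (f : (Fin n → ℝ) → ℝ) (k : Fin n) (x : Fin n → ℝ) : ℝ :=
  fderiv ℝ f x (Pi.single k 1)

/-- Kronecker delta. -/
def kd {n : ℕ} (i j : Fin n) : ℝ := if i = j then 1 else 0

/-- Christoffel symbols `𝓕^i_{jk}(g) = ½ g^{ip}(∂_k g_{pj} + ∂_j g_{pk} − ∂_p g_{jk})`
of a metric `g` with pointwise inverse `ginv`. -/
noncomputable def christoffel {n : ℕ}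
    (g ginv : (Fin n → ℝ) → Matrix (Fin n) (Fin n) ℝ)
    (x : Fin n → ℝ) (i j k : Fin n) : ℝ :=
  (1 / 2) * ∑ p, ginv x i p *
    (pd (fun y => g y p j) k x + pd (fun y => g y p k) j x - pd (fun y => g y j k) p x)

/-- Conformal rescaling `x ↦ e^{2φ(x)} g(x)` of a metric `g`. -/
noncomputable def confRescale {n : ℕ} (φ : (Fin n → ℝ) → ℝ)
    (g : (Fin n → ℝ) → Matrix (Fin n) (Fin n) ℝ) :
    (Fin n → ℝ) → Matrix (Fin n) (Fin n) ℝ :=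
  fun x => Real.exp (2 * φ x) • g x

/-- Thomas symbol `Π^i_{jk}(Γ) = Γ^i_{jk} − (1/(n+1)) δ^i_j Γ^p_{pk} − (1/(n+1)) δ^i_k Γ^p_{pj}`. -/
noncomputable def thomas {n : ℕ}
    (Γ : (Fin n → ℝ) → Fin n → Fin n → Fin n → ℝ)
    (x : Fin n → ℝ) (i j k : Fin n) : ℝ :=
  Γ x i j k - (1 / (n + 1 : ℝ)) * kd i j * (∑ p, Γ x p p k)
    - (1 / (n + 1 : ℝ)) * kd i k * (∑ p, Γ x p p j)

/-- projectively equivalent connections `Γ'^i_{jk} = Γ^i_{jk} + δ^i_j ψ_k + δ^i_k ψ_j`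
have the same Thomas symbol. -/
theorem thomas_projective_invariance {n : ℕ} (hn : 1 ≤ n)
    (U : Set (Fin n → ℝ)) (hU : IsOpen U)
    (Γ : (Fin n → ℝ) → Fin n → Fin n → Fin n → ℝ)
    (hΓ_symm : ∀ x ∈ U, ∀ i j k, Γ x i j k = Γ x i k j)
    (ψ : (Fin n → ℝ) → Fin n → ℝ) :
    ∀ x ∈ U, ∀ i j k,
      thomas (fun y a b c => Γ y a b c + kd a b * ψ y c + kd a c * ψ y b) x i j k =
        thomas Γ x i j k := by
  intro x hx i j k
  have key : ∀ c, (∑ p, (Γ x p p c + kd p p * ψ x c + kd p c * ψ x p)) =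
      (∑ p, Γ x p p c) + (n + 1 : ℝ) * ψ x c := by
    intro c
    have h1 : (∑ p : Fin n, kd p p * ψ x c) = (n : ℝ) * ψ x c := by
      simp [kd, Finset.sum_const, mul_comm]
    have h2 : (∑ p : Fin n, kd p c * ψ x p) = ψ x c := by
      simp [kd, Finset.sum_ite_eq' Finset.univ c (fun p => ψ x p)]
    rw [Finset.sum_add_distrib, Finset.sum_add_distrib, h1, h2]
    ring
  have hne : (n + 1 : ℝ) ≠ 0 := by positivity
  simp only [thomas, key]
  by_cases hij : i = j <;> by_cases hik : i = k <;> by_cases hjk : j = k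
  · simp [kd, hij, hik, hjk]; field_simp; ring
  · exact absurd (hij.symm.trans hik) hjk
  · exact absurd (hij.trans hjk) hik
  · simp [kd, hij, hik, hjk, show ¬ k = i from fun h => hik h.symm,
      show ¬ k = j from fun h => hjk h.symm]
    field_simp; ring
  · exact absurd (hik.trans hjk.symm) hij
  · simp [kd, hij, hik, hjk, show ¬ j = i from fun h => hij h.symm,
      show ¬ k = j from fun h => hjk h.symm]
    field_simp; ring
  · simp [kd, hij, hik, hjk, show ¬ j = i from fun h => hij h.symm,
      show ¬ k = i from fun h => hik h.symm]
  · simp [kd, hij, hik, hjk, show ¬ j = i from fun h => hij h.symm,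
      show ¬ k = i from fun h => hik h.symm, show ¬ k = j from fun h => hjk h.symm]
end

section
/- Let n ≥ 1 and let Γ, Γ' : U → (Fin n → Fin n → Fin n → ℝ) be two connection coefficients on an open set U ⊆ ℝⁿ, both symmetric in the lower indices. If their Thomas symbols coincide at every point of U, Π^i_{jk}(Γ') = Π^i_{jk}(Γ), then there exists ψ : U → (Fin n → ℝ) such that Γ'^i_{jk} = Γ^i_{jk} + δ^i_j ψ_k + δ^i_k ψ_j everywhere on U; moreover ψ is necessarily given by ψ_k = (Γ'^p_{pk} − Γ^p_{pk})/(n+1). -/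
open scoped BigOperators

/-- if two symmetric connection coefficients have the same Thomas symbol on `U`,
then they are projectively equivalent, with the 1-form `ψ` necessarily given by
`ψ_k = (Γ'^p_{pk} − Γ^p_{pk})/(n+1)`. -/
theorem thomas_eq_implies_projectively_equivalent {n : ℕ} (hn : 1 ≤ n)
    (U : Set (Fin n → ℝ)) (hU : IsOpen U)
    (Γ Γ' : (Fin n → ℝ) → Fin n → Fin n → Fin n → ℝ)
    (hΓ_symm : ∀ x ∈ U, ∀ i j k, Γ x i j k = Γ x i k j)
    (hΓ'_symm : ∀ x ∈ U, ∀ i j k, Γ' x i j k = Γ' x i k j)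
    (hthomas : ∀ x ∈ U, ∀ i j k, thomas Γ' x i j k = thomas Γ x i j k) :
    ∃ ψ : (Fin n → ℝ) → Fin n → ℝ,
      (∀ x ∈ U, ∀ i j k,
        Γ' x i j k = Γ x i j k + kd i j * ψ x k + kd i k * ψ x j) ∧
      (∀ x ∈ U, ∀ k,
        ψ x k = (∑ p, (Γ' x p p k - Γ x p p k)) / (n + 1 : ℝ)) := by
  refine ⟨fun x k => (∑ p, (Γ' x p p k - Γ x p p k)) / (n + 1 : ℝ), ?_, fun _ _ _ => rfl⟩
  intro x hx i j k
  have h := hthomas x hx i j k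
  simp only [thomas] at h
  simp only [Finset.sum_sub_distrib]
  have hne : (n + 1 : ℝ) ≠ 0 := by positivity
  field_simp at h ⊢
  linarith
end

section
/- Let n ≥ 2, let U ⊆ ℝⁿ be open, let g : U → Matrix (Fin n) (Fin n) ℝ take values in symmetric invertible matrices with pointwise inverse g^{ij}, let T^i_{jk} : U → ℝ be symmetric in j,k, define T^i = ((n+1)/((n+2)(n−1))) g^{jk} T^i_{jk} and T_i = g_{ij} T^j, and let φ : U → ℝ be differentiable. Then at any point x ∈ U the following are equivalent: (i) T^i_{jk} − g_{jk} g^{ip} ∂_pφ + (1/(n+1)) δ^i_j ∂_kφ + (1/(n+1)) δ^i_k ∂_jφ = 0 for all i,j,k; (ii) ∂_iφ = T_i for all i, and T^i_{jk} − g_{jk} T^i + (1/(n+1)) δ^i_j T_k + (1/(n+1)) δ^i_k T_j = 0 for all i,j,k. -/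
open scoped BigOperators

/-- The contraction `T^i = ((n+1)/((n+2)(n−1))) g^{jk} T^i_{jk}`. -/
noncomputable def upT {n : ℕ} (ginv : (Fin n → ℝ) → Matrix (Fin n) (Fin n) ℝ)
    (T : (Fin n → ℝ) → Fin n → Fin n → Fin n → ℝ) (x : Fin n → ℝ) (i : Fin n) : ℝ :=
  ((n + 1 : ℝ) / ((n + 2 : ℝ) * ((n : ℝ) - 1))) * ∑ j, ∑ k, ginv x j k * T x i j k

/-- The contraction `T_i = g_{ij} T^j`. -/
noncomputable def lowT {n : ℕ} (g ginv : (Fin n → ℝ) → Matrix (Fin n) (Fin n) ℝ)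
    (T : (Fin n → ℝ) → Fin n → Fin n → Fin n → ℝ) (x : Fin n → ℝ) (i : Fin n) : ℝ :=
  ∑ j, g x i j * upT ginv T x j

/-!
Both conditions say that `T^i_{jk} - g_{jk} v^i + (δ^i_j v_k + δ^i_k v_j)/(n+1)` vanishes, where
`v_k = g_{kl} v^l`: condition (i) with `v = g⁻¹ ∇φ`, condition (ii) with `v^i = T^i` together with
`∇φ = g v`. Contracting the vanishing tensor with `g^{jk}` gives
`g^{jk} T^i_{jk} = (n - 2/(n+1)) v^i = ((n+2)(n-1)/(n+1)) v^i`, so `v^i = T^i` is forced, and the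
two conditions coincide.
-/

open Matrix

section CondA

variable {n : ℕ}

lemma sum_kd_mul (i : Fin n) (f : Fin n → ℝ) : ∑ j, kd i j * f j = f i := by
  simp [kd]

noncomputable def condAResidual (G : Matrix (Fin n) (Fin n) ℝ) (t : Fin n → Fin n → Fin n → ℝ)
    (v w : Fin n → ℝ) (i j k : Fin n) : ℝ :=
  t i j k - G j k * v i + (1 / (n + 1 : ℝ)) * kd i j * w k + (1 / (n + 1 : ℝ)) * kd i k * w j

variable {G Gi : Matrix (Fin n) (Fin n) ℝ}

lemma mulVec_eq_iff_eq_mulVec (hG : G * Gi = 1) {u w : Fin n → ℝ} :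
    G *ᵥ u = w ↔ u = Gi *ᵥ w := by
  have hGi : Gi * G = 1 := mul_eq_one_comm.mp hG
  constructor
  · rintro rfl
    rw [mulVec_mulVec, hGi, one_mulVec]
  · rintro rfl
    rw [mulVec_mulVec, hG, one_mulVec]

lemma sum_sum_mul_eq_card (hGi : Gi * G = 1) (hsymm : G.IsSymm) :
    ∑ j, ∑ k, Gi j k * G j k = n := by
  calc ∑ j, ∑ k, Gi j k * G j k = (Gi * G).trace := by
        simp only [trace, diag, mul_apply]
        exact Finset.sum_congr rfl fun j _ => Finset.sum_congr rfl fun k _ => by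
          rw [hsymm.apply j k]
    _ = n := by simp [hGi]

theorem sum_sum_mul_condAResidual (hG : G * Gi = 1) (hsymm : G.IsSymm)
    (t : Fin n → Fin n → Fin n → ℝ) (v : Fin n → ℝ) (i : Fin n) :
    ∑ j, ∑ k, Gi j k * condAResidual G t v (G *ᵥ v) i j k
      = ∑ j, ∑ k, Gi j k * t i j k - (n - 2 / (n + 1 : ℝ)) * v i := by
  have hGi : Gi * G = 1 := mul_eq_one_comm.mp hG
  have hinv_symm : Gi.IsSymm := inv_eq_right_inv hG ▸ hsymm.inv
  have hraise : Gi *ᵥ (G *ᵥ v) = v := by rw [mulVec_mulVec, hGi, one_mulVec]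
  have hleft : ∑ j, ∑ k, Gi j k * (kd i j * (G *ᵥ v) k) = v i := by
    calc _ = ∑ j, kd i j * (Gi *ᵥ (G *ᵥ v)) j := by
          refine Finset.sum_congr rfl fun j _ => ?_
          rw [mulVec, dotProduct, Finset.mul_sum]
          exact Finset.sum_congr rfl fun k _ => by ring
      _ = v i := by rw [sum_kd_mul, hraise]
  have hright : ∑ j, ∑ k, Gi j k * (kd i k * (G *ᵥ v) j) = v i := by
    calc _ = ∑ j, Gi i j * (G *ᵥ v) j := by
          refine Finset.sum_congr rfl fun j _ => ?_
          rw [hinv_symm.apply j i]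
          simp [kd]
      _ = v i := congrFun hraise i
  have htrace := sum_sum_mul_eq_card hGi hsymm
  have hexpand : ∀ j k, Gi j k * condAResidual G t v (G *ᵥ v) i j k = Gi j k * t i j k
      - Gi j k * G j k * v i + 1 / (n + 1 : ℝ) * (Gi j k * (kd i j * (G *ᵥ v) k))
      + 1 / (n + 1 : ℝ) * (Gi j k * (kd i k * (G *ᵥ v) j)) := fun j k => by
    rw [condAResidual]; ring
  simp only [hexpand, Finset.sum_add_distrib, Finset.sum_sub_distrib, ← Finset.mul_sum,
    ← Finset.sum_mul, hleft, hright, htrace]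
  ring

theorem upT_eq_of_condAResidual_eq_zero (hn : n ≠ 1)
    {g ginv : (Fin n → ℝ) → Matrix (Fin n) (Fin n) ℝ}
    {T : (Fin n → ℝ) → Fin n → Fin n → Fin n → ℝ} {x : Fin n → ℝ} (hG : g x * ginv x = 1)
    (hsymm : (g x).IsSymm) {v : Fin n → ℝ}
    (h : ∀ i j k, condAResidual (g x) (T x) v (g x *ᵥ v) i j k = 0) :
    upT ginv T x = v := by
  funext i
  have hcontract := sum_sum_mul_condAResidual hG hsymm (T x) v i
  simp only [h, mul_zero, Finset.sum_const_zero] at hcontract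
  have hn' : (n : ℝ) - 1 ≠ 0 := sub_ne_zero.mpr (by exact_mod_cast hn)
  rw [upT, sub_eq_zero.mp hcontract.symm]
  field_simp
  ring

theorem forall_condAResidual_eq_zero_iff (hn : n ≠ 1)
    {g ginv : (Fin n → ℝ) → Matrix (Fin n) (Fin n) ℝ}
    {T : (Fin n → ℝ) → Fin n → Fin n → Fin n → ℝ} {x : Fin n → ℝ} (hG : g x * ginv x = 1)
    (hsymm : (g x).IsSymm) (D : Fin n → ℝ) :
    (∀ i j k, condAResidual (g x) (T x) (ginv x *ᵥ D) D i j k = 0) ↔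
      D = lowT g ginv T x ∧
        ∀ i j k, condAResidual (g x) (T x) (upT ginv T x) (lowT g ginv T x) i j k = 0 := by
  have hlow : lowT g ginv T x = g x *ᵥ upT ginv T x := rfl
  constructor
  · intro h
    set v := ginv x *ᵥ D
    have hD : g x *ᵥ v = D := (mulVec_eq_iff_eq_mulVec hG).mpr rfl
    have hup : upT ginv T x = v := upT_eq_of_condAResidual_eq_zero hn hG hsymm (by rwa [hD])
    rw [hlow, hup, hD]
    exact ⟨rfl, h⟩
  · rintro ⟨hD, h⟩
    have hraise : ginv x *ᵥ lowT g ginv T x = upT ginv T x :=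
      ((mulVec_eq_iff_eq_mulVec hG).mp hlow.symm).symm
    rwa [hD, hraise]

end CondA

theorem eq_Meq_iff_gradient_and_condA_general {n : ℕ} (hn : 2 ≤ n)
    (U : Set (Fin n → ℝ))
    (g ginv : (Fin n → ℝ) → Matrix (Fin n) (Fin n) ℝ)
    (hg_symm : ∀ x ∈ U, (g x).IsSymm)
    (hg_inv : ∀ x ∈ U, g x * ginv x = 1)
    (T : (Fin n → ℝ) → Fin n → Fin n → Fin n → ℝ)
    (φ : (Fin n → ℝ) → ℝ)
    (x : Fin n → ℝ) (hx : x ∈ U) :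
    (∀ i j k,
      T x i j k - g x j k * (∑ p, ginv x i p * pd φ p x)
        + (1 / (n + 1 : ℝ)) * kd i j * pd φ k x
        + (1 / (n + 1 : ℝ)) * kd i k * pd φ j x = 0)
    ↔
    ((∀ i, pd φ i x = lowT g ginv T x i) ∧
     (∀ i j k,
       T x i j k - g x j k * upT ginv T x i
         + (1 / (n + 1 : ℝ)) * kd i j * lowT g ginv T x k
         + (1 / (n + 1 : ℝ)) * kd i k * lowT g ginv T x j = 0)) := by
  rw [← funext_iff]
  exact forall_condAResidual_eq_zero_iff (by omega) (hg_inv x hx) (hg_symm x hx)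
    (fun p => pd φ p x)

/-- equation `(5)` of the paper holds at `x` iff `∂_iφ = T_i` and the algebraic
condition (A) hold at `x`. -/
theorem eq_Meq_iff_gradient_and_condA {n : ℕ} (hn : 2 ≤ n)
    (U : Set (Fin n → ℝ)) (hU : IsOpen U)
    (g ginv : (Fin n → ℝ) → Matrix (Fin n) (Fin n) ℝ)
    (hg_symm : ∀ x ∈ U, (g x).IsSymm)
    (hg_inv : ∀ x ∈ U, g x * ginv x = 1)
    (T : (Fin n → ℝ) → Fin n → Fin n → Fin n → ℝ)
    (hT_symm : ∀ x ∈ U, ∀ i j k, T x i j k = T x i k j)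
    (φ : (Fin n → ℝ) → ℝ) (hφ : DifferentiableOn ℝ φ U)
    (x : Fin n → ℝ) (hx : x ∈ U) :
    (∀ i j k,
      T x i j k - g x j k * (∑ p, ginv x i p * pd φ p x)
        + (1 / (n + 1 : ℝ)) * kd i j * pd φ k x
        + (1 / (n + 1 : ℝ)) * kd i k * pd φ j x = 0)
    ↔
    ((∀ i, pd φ i x = lowT g ginv T x i) ∧
     (∀ i j k,
       T x i j k - g x j k * upT ginv T x i
         + (1 / (n + 1 : ℝ)) * kd i j * lowT g ginv T x k
         + (1 / (n + 1 : ℝ)) * kd i k * lowT g ginv T x j = 0)) :=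
  eq_Meq_iff_gradient_and_condA_general hn U g ginv hg_symm hg_inv T φ x hx
end

section
/- (Necessity in the main theorem.) Let n ≥ 2, let U ⊆ ℝⁿ be open, let g : U → Matrix (Fin n) (Fin n) ℝ be smooth with values in symmetric invertible matrices and smooth pointwise inverse g^{ij}, and let Γ be smooth connection coefficients on U, symmetric in the lower indices. Define T^i_{jk} = Π^i_{jk}(𝓕(g)) − Π^i_{jk}(Γ), T^i = ((n+1)/((n+2)(n−1))) g^{jk} T^i_{jk}, and T_i = g_{ij} T^j. If there exists a smooth φ : U → ℝ such that Π(𝓕(e^{2φ}g)) = Π(Γ) everywhere on U, then on all of U: (A) T^i_{jk} − g_{jk} T^i + (1/(n+1)) δ^i_j T_k + (1/(n+1)) δ^i_k T_j = 0 for all i,j,k, and (B) ∂_j T_i − ∂_i T_j = 0 for all i,j. -/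
open scoped BigOperators

/-- Compatibility tensor `T^i_{jk} = Π^i_{jk}(𝓕(g)) − Π^i_{jk}(Γ)`. -/
noncomputable def compatT {n : ℕ} (g ginv : (Fin n → ℝ) → Matrix (Fin n) (Fin n) ℝ)
    (Γ : (Fin n → ℝ) → Fin n → Fin n → Fin n → ℝ)
    (x : Fin n → ℝ) (i j k : Fin n) : ℝ :=
  thomas (christoffel g ginv) x i j k - thomas Γ x i j k


open scoped Topology

lemma pd_symm {n : ℕ} {U : Set (Fin n → ℝ)} (hU : IsOpen U) {φ : (Fin n → ℝ) → ℝ}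
    (hφ : ContDiffOn ℝ (⊤ : ℕ∞) φ U) {x : Fin n → ℝ} (hx : x ∈ U) (i j : Fin n) :
    pd (fun y => pd φ i y) j x = pd (fun y => pd φ j y) i x := by
  have hat : ContDiffAt ℝ (⊤ : ℕ∞) φ x := hφ.contDiffAt (hU.mem_nhds hx)
  have hd' : DifferentiableAt ℝ (fderiv ℝ φ) x := by
    have h1 : ContDiffAt ℝ 1 (fderiv ℝ φ) x := hat.fderiv_right (WithTop.coe_le_coe.mpr le_top)
    exact h1.differentiableAt one_ne_zero
  have hev : ∀ᶠ y in 𝓝 x, HasFDerivAt φ (fderiv ℝ φ y) y := by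
    filter_upwards [hU.mem_nhds hx] with y hy
    exact ((hφ.contDiffAt (hU.mem_nhds hy)).differentiableAt (by simp)).hasFDerivAt
  have hsymm := second_derivative_symmetric_of_eventually hev hd'.hasFDerivAt
    (Pi.single i 1) (Pi.single j 1)
  have key : ∀ v w : Fin n → ℝ,
      fderiv ℝ (fun y => fderiv ℝ φ y v) x w = fderiv ℝ (fderiv ℝ φ) x w v := by
    intro v w
    have h := ((ContinuousLinearMap.apply ℝ ℝ v).hasFDerivAt.comp x hd'.hasFDerivAt)
    have h2 : fderiv ℝ (fun y => fderiv ℝ φ y v) x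
        = (ContinuousLinearMap.apply ℝ ℝ v).comp (fderiv ℝ (fderiv ℝ φ) x) := h.fderiv
    rw [h2]; rfl
  simp only [pd]
  rw [key, key]
  exact hsymm.symm

/-- necessity in the main theorem: if some conformal rescaling `e^{2φ}g` has its
Levi-Civita connection projectively equivalent to `Γ` (equal Thomas symbols), then
conditions (A) and (B) hold on all of `U`. -/
theorem compatibility_necessary {n : ℕ} (hn : 2 ≤ n)
    (U : Set (Fin n → ℝ)) (hU : IsOpen U)
    (g ginv : (Fin n → ℝ) → Matrix (Fin n) (Fin n) ℝ)
    (hg_smooth : ∀ i j, ContDiffOn ℝ (⊤ : ℕ∞) (fun y => g y i j) U)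
    (hginv_smooth : ∀ i j, ContDiffOn ℝ (⊤ : ℕ∞) (fun y => ginv y i j) U)
    (hg_symm : ∀ x ∈ U, (g x).IsSymm)
    (hg_inv : ∀ x ∈ U, g x * ginv x = 1)
    (Γ : (Fin n → ℝ) → Fin n → Fin n → Fin n → ℝ)
    (hΓ_smooth : ∀ i j k, ContDiffOn ℝ (⊤ : ℕ∞) (fun y => Γ y i j k) U)
    (hΓ_symm : ∀ x ∈ U, ∀ i j k, Γ x i j k = Γ x i k j)
    (hcompat : ∃ φ : (Fin n → ℝ) → ℝ, ContDiffOn ℝ (⊤ : ℕ∞) φ U ∧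
      ∀ x ∈ U, ∀ i j k,
        thomas (christoffel (confRescale φ g) (confRescale (fun y => -φ y) ginv)) x i j k
          = thomas Γ x i j k) :
    (∀ x ∈ U, ∀ i j k,
      compatT g ginv Γ x i j k - g x j k * upT ginv (compatT g ginv Γ) x i
        + (1 / (n + 1 : ℝ)) * kd i j * lowT g ginv (compatT g ginv Γ) x k
        + (1 / (n + 1 : ℝ)) * kd i k * lowT g ginv (compatT g ginv Γ) x j = 0) ∧
    (∀ x ∈ U, ∀ i j,
      pd (fun y => lowT g ginv (compatT g ginv Γ) y i) j x
        - pd (fun y => lowT g ginv (compatT g ginv Γ) y j) i x = 0) := by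
  obtain ⟨φ, hφs, hφeq⟩ := hcompat
  have hn1 : ((n : ℝ) + 1) ≠ 0 := by positivity
  have hn2 : ((n : ℝ) + 2) ≠ 0 := by positivity
  have hncast : (2 : ℝ) ≤ (n : ℝ) := by exact_mod_cast hn
  have hnm1 : ((n : ℝ) - 1) ≠ 0 := by linarith
  have hφd : ∀ x ∈ U, DifferentiableAt ℝ φ x := fun x hx =>
    (hφs.contDiffAt (hU.mem_nhds hx)).differentiableAt (by simp)
  have hgd : ∀ (p q : Fin n), ∀ x ∈ U, DifferentiableAt ℝ (fun y => g y p q) x :=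
    fun p q x hx => ((hg_smooth p q).contDiffAt (hU.mem_nhds hx)).differentiableAt (by simp)
  have hcontr2 : ∀ x ∈ U, ∀ i j, ∑ p, g x i p * ginv x p j = kd i j := by
    intro x hx i j
    calc ∑ p, g x i p * ginv x p j = (g x * ginv x) i j := (Matrix.mul_apply).symm
      _ = (1 : Matrix (Fin n) (Fin n) ℝ) i j := by rw [hg_inv x hx]
      _ = kd i j := by simp [Matrix.one_apply, kd]
  have hcontr1 : ∀ x ∈ U, ∀ i j, ∑ p, ginv x i p * g x p j = kd i j := by
    intro x hx i j
    calc ∑ p, ginv x i p * g x p j = (ginv x * g x) i j := (Matrix.mul_apply).symm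
      _ = (1 : Matrix (Fin n) (Fin n) ℝ) i j := by
          rw [mul_eq_one_comm.mp (hg_inv x hx)]
      _ = kd i j := by simp [Matrix.one_apply, kd]
  have hgs : ∀ x ∈ U, ∀ i j, g x i j = g x j i := fun x hx i j => (hg_symm x hx).apply j i
  have hginvs : ∀ x ∈ U, ∀ i j, ginv x i j = ginv x j i := by
    intro x hx
    have h1 : g x * ginv x = 1 := hg_inv x hx
    have h3 : (ginv x).transpose * g x = 1 := by
      calc (ginv x).transpose * g x = (ginv x).transpose * (g x).transpose := by rw [(hg_symm x hx).eq]
        _ = (g x * ginv x).transpose := by rw [Matrix.transpose_mul]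
        _ = 1 := by rw [h1, Matrix.transpose_one]
    have h4 : (ginv x).transpose = ginv x := by
      calc (ginv x).transpose = (ginv x).transpose * (g x * ginv x) := by rw [h1, mul_one]
        _ = ((ginv x).transpose * g x) * ginv x := by rw [Matrix.mul_assoc]
        _ = ginv x := by rw [h3, one_mul]
    intro i j
    have h5 := Matrix.ext_iff.mpr h4 j i
    rwa [Matrix.transpose_apply] at h5
  -- derivative of rescaled metric entries
  have hpdE : ∀ x ∈ U, ∀ (p q k : Fin n),
      pd (fun y => confRescale φ g y p q) k x
        = Real.exp (2 * φ x) * (2 * pd φ k x * g x p q)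
          + Real.exp (2 * φ x) * pd (fun y => g y p q) k x := by
    intro x hx p q k
    have hde : DifferentiableAt ℝ (fun y => Real.exp (2 * φ y)) x :=
      ((hφd x hx).const_mul 2).exp
    have hge := hgd p q x hx
    have h1 : (fun y => confRescale φ g y p q) = fun y => Real.exp (2 * φ y) * g y p q := by
      funext y; simp [confRescale, Matrix.smul_apply, smul_eq_mul]
    rw [h1]
    simp only [pd, fderiv_fun_mul hde hge, fderiv_exp ((hφd x hx).const_mul 2),
      fderiv_const_mul (hφd x hx), ContinuousLinearMap.add_apply,
      ContinuousLinearMap.smul_apply, smul_eq_mul]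
    ring
  have hE : ∀ x : Fin n → ℝ, Real.exp (2 * -φ x) * Real.exp (2 * φ x) = 1 := by
    intro x
    rw [← Real.exp_add]
    have : 2 * -φ x + 2 * φ x = 0 := by ring
    rw [this, Real.exp_zero]
  -- christoffel of rescaled metric
  have hch : ∀ x ∈ U, ∀ i j k,
      christoffel (confRescale φ g) (confRescale (fun y => -φ y) ginv) x i j k
        = christoffel g ginv x i j k + kd i j * pd φ k x + kd i k * pd φ j x
          - g x j k * ∑ p, ginv x i p * pd φ p x := by
    intro x hx i j k
    unfold christoffel
    have hstep : ∀ p : Fin n,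
        confRescale (fun y => -φ y) ginv x i p *
          (pd (fun y => confRescale φ g y p j) k x + pd (fun y => confRescale φ g y p k) j x
            - pd (fun y => confRescale φ g y j k) p x)
        = ginv x i p * (pd (fun y => g y p j) k x + pd (fun y => g y p k) j x
              - pd (fun y => g y j k) p x)
          + (2 * pd φ k x) * (ginv x i p * g x p j)
          + (2 * pd φ j x) * (ginv x i p * g x p k)
          - (2 * g x j k) * (ginv x i p * pd φ p x) := by
      intro p
      rw [hpdE x hx p j k, hpdE x hx p k j, hpdE x hx j k p]
      have hcr : confRescale (fun y => -φ y) ginv x i p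
          = Real.exp (2 * -φ x) * ginv x i p := by
        simp [confRescale, Matrix.smul_apply, smul_eq_mul]
      rw [hcr]
      have h := hE x
      linear_combination (ginv x i p * (pd (fun y => g y p j) k x + pd (fun y => g y p k) j x
          - pd (fun y => g y j k) p x)
        + 2 * pd φ k x * (ginv x i p * g x p j) + 2 * pd φ j x * (ginv x i p * g x p k)
        - 2 * g x j k * (ginv x i p * pd φ p x)) * h
    rw [Finset.sum_congr rfl (fun p _ => hstep p)]
    simp only [Finset.sum_sub_distrib, Finset.sum_add_distrib, ← Finset.mul_sum]
    rw [hcontr1 x hx i j, hcontr1 x hx i k]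
    ring
  -- trace of rescaled christoffel
  have htr : ∀ x ∈ U, ∀ k,
      ∑ p, christoffel (confRescale φ g) (confRescale (fun y => -φ y) ginv) x p p k
        = (∑ p, christoffel g ginv x p p k) + n * pd φ k x := by
    intro x hx k
    rw [Finset.sum_congr rfl (fun p _ => hch x hx p p k)]
    have e1 : ∑ _p : Fin n, (pd φ k x : ℝ) = n * pd φ k x := by
      rw [Finset.sum_const]; simp [Finset.card_univ]
    have e2 : ∑ p : Fin n, kd p k * pd φ p x = pd φ k x := by
      simp [kd, ite_mul]
    have e3 : ∑ p : Fin n, g x p k * ∑ q, ginv x p q * pd φ q x = pd φ k x := by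
      have h1 : ∀ p : Fin n, g x p k * ∑ q, ginv x p q * pd φ q x
          = ∑ q, g x p k * (ginv x p q * pd φ q x) := fun p => Finset.mul_sum _ _ _
      rw [Finset.sum_congr rfl fun p _ => h1 p, Finset.sum_comm]
      have h2 : ∀ q, (∑ p, g x p k * (ginv x p q * pd φ q x)) = kd k q * pd φ q x := by
        intro q
        calc ∑ p, g x p k * (ginv x p q * pd φ q x)
            = (∑ p, g x k p * ginv x p q) * pd φ q x := by
              rw [Finset.sum_mul]
              exact Finset.sum_congr rfl fun p _ => by rw [hgs x hx p k]; ring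
          _ = kd k q * pd φ q x := by rw [hcontr2 x hx k q]
      rw [Finset.sum_congr rfl fun q _ => h2 q]
      simp [kd, ite_mul]
    have e0 : ∀ p : Fin n, kd p p * pd φ k x = pd φ k x := by
      intro p; simp [kd]
    simp only [Finset.sum_add_distrib, Finset.sum_sub_distrib]
    rw [Finset.sum_congr rfl fun p _ => e0 p, e1, e2, e3]
    ring
  -- key formula for the compatibility tensor
  have hkey : ∀ x ∈ U, ∀ i j k,
      compatT g ginv Γ x i j k
        = g x j k * (∑ p, ginv x i p * pd φ p x)
          - (1 / ((n : ℝ) + 1)) * kd i j * pd φ k x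
          - (1 / ((n : ℝ) + 1)) * kd i k * pd φ j x := by
    intro x hx i j k
    unfold compatT
    rw [← hφeq x hx i j k]
    unfold thomas
    rw [hch x hx i j k, htr x hx k, htr x hx j]
    field_simp
    ring
  -- contraction upT equals V^i = g^{ip} ∂_p φ
  have hup : ∀ x ∈ U, ∀ i, upT ginv (compatT g ginv Γ) x i
      = ∑ p, ginv x i p * pd φ p x := by
    intro x hx i
    unfold upT
    have hinner : ∀ j, ∑ k, ginv x j k * compatT g ginv Γ x i j k
        = (∑ p, ginv x i p * pd φ p x)
          - (1 / ((n : ℝ) + 1)) * (kd i j * (∑ k, ginv x j k * pd φ k x))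
          - (1 / ((n : ℝ) + 1)) * (pd φ j x * ginv x j i) := by
      intro j
      rw [Finset.sum_congr rfl fun k _ => by rw [hkey x hx i j k]]
      have expand : ∀ k : Fin n,
          ginv x j k * (g x j k * (∑ p, ginv x i p * pd φ p x)
            - (1 / ((n : ℝ) + 1)) * kd i j * pd φ k x
            - (1 / ((n : ℝ) + 1)) * kd i k * pd φ j x)
          = (∑ p, ginv x i p * pd φ p x) * (ginv x j k * g x k j)
            - ((1 / ((n : ℝ) + 1)) * kd i j) * (ginv x j k * pd φ k x)
            - ((1 / ((n : ℝ) + 1)) * pd φ j x) * (ginv x j k * kd i k) := by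
        intro k; rw [hgs x hx j k]; ring
      rw [Finset.sum_congr rfl fun k _ => expand k]
      simp only [Finset.sum_sub_distrib, ← Finset.mul_sum]
      rw [hcontr1 x hx j j]
      have hgi : ∑ k, ginv x j k * kd i k = ginv x j i := by
        simp [kd, mul_ite]
      rw [hgi]
      have hkdjj : kd j j = 1 := by simp [kd]
      rw [hkdjj]
      ring
    rw [Finset.sum_congr rfl fun j _ => hinner j]
    simp only [Finset.sum_sub_distrib, ← Finset.mul_sum, Finset.sum_const, Finset.card_univ,
      Fintype.card_fin, nsmul_eq_mul]
    have eW : ∑ j, kd i j * (∑ k, ginv x j k * pd φ k x) = ∑ p, ginv x i p * pd φ p x := by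
      simp [kd, ite_mul]
    have eW2 : ∑ j, pd φ j x * ginv x j i = ∑ p, ginv x i p * pd φ p x := by
      refine Finset.sum_congr rfl fun j _ => ?_
      rw [hginvs x hx j i]; ring
    rw [eW, eW2]
    field_simp
    ring
  -- contraction lowT equals ∂_i φ
  have hlow : ∀ x ∈ U, ∀ i, lowT g ginv (compatT g ginv Γ) x i = pd φ i x := by
    intro x hx i
    unfold lowT
    rw [Finset.sum_congr rfl fun j _ => by rw [hup x hx j]]
    have h1 : ∀ j : Fin n, g x i j * ∑ p, ginv x j p * pd φ p x
        = ∑ p, (g x i j * ginv x j p) * pd φ p x := by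
      intro j; rw [Finset.mul_sum]; exact Finset.sum_congr rfl fun p _ => by ring
    rw [Finset.sum_congr rfl fun j _ => h1 j, Finset.sum_comm]
    have h2 : ∀ p, (∑ j, (g x i j * ginv x j p) * pd φ p x) = kd i p * pd φ p x := by
      intro p; rw [← Finset.sum_mul, hcontr2 x hx i p]
    rw [Finset.sum_congr rfl fun p _ => h2 p]
    simp [kd, ite_mul]
  constructor
  · intro x hx i j k
    rw [hkey x hx i j k, hup x hx i, hlow x hx k, hlow x hx j]
    ring
  · intro x hx i j
    have h1 : pd (fun y => lowT g ginv (compatT g ginv Γ) y i) j x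
        = pd (fun y => pd φ i y) j x := by
      unfold pd
      congr 1
      apply Filter.EventuallyEq.fderiv_eq
      filter_upwards [hU.mem_nhds hx] with y hy
      exact hlow y hy i
    have h2 : pd (fun y => lowT g ginv (compatT g ginv Γ) y j) i x
        = pd (fun y => pd φ j y) i x := by
      unfold pd
      congr 1
      apply Filter.EventuallyEq.fderiv_eq
      filter_upwards [hU.mem_nhds hx] with y hy
      exact hlow y hy j
    rw [h1, h2, pd_symm hU hφs hx i j, sub_self]
end

section
/- (Local sufficiency in the main theorem.) Let n ≥ 2, let U ⊆ ℝⁿ be open, let g : U → Matrix (Fin n) (Fin n) ℝ be smooth with values in symmetric invertible matrices and smooth pointwise inverse g^{ij}, and let Γ be smooth connection coefficients on U, symmetric in the lower indices. Define T^i_{jk} = Π^i_{jk}(𝓕(g)) − Π^i_{jk}(Γ), T^i = ((n+1)/((n+2)(n−1))) g^{jk} T^i_{jk}, and T_i = g_{ij} T^j. If on all of U conditions (A) T^i_{jk} − g_{jk} T^i + (1/(n+1)) δ^i_j T_k + (1/(n+1)) δ^i_k T_j = 0 and (B) ∂_j T_i − ∂_i T_j = 0 hold, then for every x ∈ U there exist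 an open neighborhood V ⊆ U of x and a smooth φ : V → ℝ such that Π(𝓕(e^{2φ}g)) = Π(Γ) everywhere on V. -/
open scoped BigOperators

open MeasureTheory Metric Set


section Poincare


variable {n : ℕ}

lemma clm_apply_eq_sum (L : (Fin n → ℝ) →L[ℝ] ℝ) (v : Fin n → ℝ) :
    L v = ∑ i, v i * L (Pi.single i 1) := by
  have hv : v = ∑ i, v i • (Pi.single i 1 : Fin n → ℝ) := by
    funext j
    rw [Finset.sum_apply]
    rw [Finset.sum_eq_single j]
    · simp
    · intro i _ hij
      have : (Pi.single i 1 : Fin n → ℝ) j = 0 := Pi.single_eq_of_ne (Ne.symm hij) 1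
      simp [this]
    · simp
  conv_lhs => rw [hv]
  rw [map_sum]
  congr 1
  funext i
  rw [ContinuousLinearMap.map_smul, smul_eq_mul]

lemma norm_proj_le_one (i : Fin n) :
    ‖(ContinuousLinearMap.proj i : ((Fin n → ℝ) →L[ℝ] ℝ))‖ ≤ 1 :=
  ContinuousLinearMap.opNorm_le_bound _ zero_le_one
    (fun v => by simpa using norm_le_pi_norm v i)

set_option maxHeartbeats 2000000 in
set_option synthInstance.maxHeartbeats 200000 in
/-- Local Poincaré lemma: a closed smooth 1-form on an open set has a local potential. -/
theorem exists_potential {U : Set (Fin n → ℝ)} (hU : IsOpen U)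
    {ω : (Fin n → ℝ) → Fin n → ℝ}
    (hω_cont : ∀ i, ContinuousOn (fun y => ω y i) U)
    (hω_diff : ∀ i, DifferentiableOn ℝ (fun y => ω y i) U)
    (hω_fcont : ∀ i, ContinuousOn (fun y => fderiv ℝ (fun z => ω z i) y) U)
    (hclosed : ∀ y ∈ U, ∀ i j, pd (fun z => ω z i) j y = pd (fun z => ω z j) i y)
    {x : Fin n → ℝ} (hx : x ∈ U) :
    ∃ ε > 0, Metric.ball x ε ⊆ U ∧ ∃ φ : (Fin n → ℝ) → ℝ,
      ∀ y ∈ Metric.ball x ε, HasFDerivAt φ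
        (∑ i, ω y i • (ContinuousLinearMap.proj i : (Fin n → ℝ) →L[ℝ] ℝ)) y := by
  obtain ⟨ε, hεpos, hεU⟩ := Metric.isOpen_iff.1 hU x hx
  refine ⟨ε, hεpos, hεU, fun y => ∫ t in (0:ℝ)..1, ∑ i, ω (x + t • (y - x)) i * (y i - x i), ?_⟩
  intro y hy
  -- basic geometry
  set d : ℝ := dist y x with hd
  have hdε : d < ε := hy
  set r : ℝ := (ε - d) / 2 with hr
  have hrpos : 0 < r := by simp only [hr]; linarith
  set ρ : ℝ := d + r with hρ
  have hρε : ρ < ε := by simp only [hρ, hr]; linarith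
  have hρnonneg : 0 ≤ ρ := by positivity
  have hzmem : ∀ (t : ℝ), t ∈ Set.Icc (0:ℝ) 1 → ∀ y', dist y' x ≤ ρ →
      x + t • (y' - x) ∈ Metric.closedBall x ρ := by
    intro t ht y' hy'
    rw [Metric.mem_closedBall, dist_eq_norm, add_sub_cancel_left, norm_smul, Real.norm_eq_abs,
      abs_of_nonneg ht.1]
    calc t * ‖y' - x‖ ≤ 1 * ‖y' - x‖ :=
          mul_le_mul_of_nonneg_right ht.2 (norm_nonneg _)
    _ = dist y' x := by rw [one_mul, dist_eq_norm]
    _ ≤ ρ := hy'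
  have hKball : Metric.closedBall x ρ ⊆ Metric.ball x ε := Metric.closedBall_subset_ball hρε
  have hKU : Metric.closedBall x ρ ⊆ U := hKball.trans hεU
  have hball_dist : ∀ y' ∈ Metric.ball y r, dist y' x ≤ ρ := by
    intro y' hy'
    calc dist y' x ≤ dist y' y + dist y x := dist_triangle _ _ _
    _ ≤ r + d := by
        have := le_of_lt (Metric.mem_ball.1 hy')
        linarith
    _ = ρ := by simp only [hρ]; ring
  have hyρ : dist y x ≤ ρ := by simp only [hρ]; linarith
  -- the z map and its membership
  set zm : ℝ → (Fin n → ℝ) → (Fin n → ℝ) := fun t y' => x + t • (y' - x) with hzm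
  have hzU : ∀ (t : ℝ), t ∈ Set.Icc (0:ℝ) 1 → ∀ y', dist y' x ≤ ρ → zm t y' ∈ U :=
    fun t ht y' hy' => hKU (hzmem t ht y' hy')
  -- derivative candidates
  set F' : (Fin n → ℝ) → ℝ → ((Fin n → ℝ) →L[ℝ] ℝ) := fun y' t =>
    ∑ i, (ω (zm t y') i • (ContinuousLinearMap.proj i : (Fin n → ℝ) →L[ℝ] ℝ)
      + (y' i - x i) • ((fderiv ℝ (fun z => ω z i) (zm t y')).comp
          (t • ContinuousLinearMap.id ℝ (Fin n → ℝ)))) with hF'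
  -- differentiability in y'
  have hdiff : ∀ (t : ℝ), t ∈ Set.Icc (0:ℝ) 1 → ∀ y', dist y' x ≤ ρ →
      HasFDerivAt (fun y'' => ∑ i, ω (zm t y'') i * (y'' i - x i)) (F' y' t) y' := by
    intro t ht y' hy'
    apply HasFDerivAt.fun_sum
    intro i _
    have h1 : HasFDerivAt (fun y'' => zm t y'')
        (t • ContinuousLinearMap.id ℝ (Fin n → ℝ)) y' := by
      have : HasFDerivAt (fun y'' : Fin n → ℝ => y'' - x)
          (ContinuousLinearMap.id ℝ (Fin n → ℝ)) y' := (hasFDerivAt_id y').sub_const x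
      simpa [hzm] using (this.const_smul t).const_add x
    have h2 : HasFDerivAt (fun z => ω z i)
        (fderiv ℝ (fun z => ω z i) (zm t y')) (zm t y') :=
      (((hω_diff i) (zm t y') (hzU t ht y' hy')).differentiableAt
        (hU.mem_nhds (hzU t ht y' hy'))).hasFDerivAt
    have h3 := h2.comp y' h1
    have h4 : HasFDerivAt (fun y'' : Fin n → ℝ => y'' i - x i)
        ((ContinuousLinearMap.proj i : (Fin n → ℝ) →L[ℝ] ℝ)) y' := by
      simpa using ((ContinuousLinearMap.proj i : (Fin n → ℝ) →L[ℝ] ℝ)).hasFDerivAt.sub_const (x i)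
    simpa using h3.fun_mul h4
  -- continuity of F' in t
  have hF'cont : ∀ y', dist y' x ≤ ρ → ContinuousOn (fun t => F' y' t) (Set.Icc (0:ℝ) 1) := by
    intro y' hy'
    apply continuousOn_finset_sum
    intro i _
    have hzcont : ContinuousOn (fun t => zm t y') (Set.Icc (0:ℝ) 1) := by fun_prop
    have hmem : ∀ t ∈ Set.Icc (0:ℝ) 1, zm t y' ∈ U := fun t ht => hzU t ht y' hy'
    apply ContinuousOn.add
    · exact (((hω_cont i).comp hzcont hmem)).smul continuousOn_const
    · apply ContinuousOn.fun_const_smul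
      apply ContinuousOn.clm_comp (((hω_fcont i).comp hzcont hmem))
      exact (continuousOn_id.smul continuousOn_const)
  -- continuity of F in t
  have hFcont : ∀ y', dist y' x ≤ ρ →
      ContinuousOn (fun t => ∑ i, ω (zm t y') i * (y' i - x i)) (Set.Icc (0:ℝ) 1) := by
    intro y' hy'
    apply continuousOn_finset_sum
    intro i _
    have hzcont : ContinuousOn (fun t => zm t y') (Set.Icc (0:ℝ) 1) := by fun_prop
    exact ((hω_cont i).comp hzcont (fun t ht => hzU t ht y' hy')).mul continuousOn_const
  -- the uniform bound
  obtain ⟨M, hM⟩ := (isCompact_closedBall x ρ).exists_bound_of_continuousOn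
    (f := fun z => (∑ i, ‖ω z i‖ + ρ * ∑ i, ‖fderiv ℝ (fun w => ω w i) z‖ : ℝ))
    (by
      apply ContinuousOn.add
      · exact continuousOn_finset_sum _ (fun i _ => ((hω_cont i).mono hKU).norm)
      · exact continuousOn_const.mul
          (continuousOn_finset_sum _ (fun i _ => ((hω_fcont i).mono hKU).norm)))
  have hbound : ∀ (t : ℝ), t ∈ Set.Icc (0:ℝ) 1 → ∀ y', dist y' x ≤ ρ → ‖F' y' t‖ ≤ M := by
    intro t ht y' hy'
    have hz := hzmem t ht y' hy'
    refine le_trans (norm_sum_le _ _) ?_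
    have key : ∀ i, ‖ω (zm t y') i • (ContinuousLinearMap.proj i : (Fin n → ℝ) →L[ℝ] ℝ)
        + (y' i - x i) • ((fderiv ℝ (fun z => ω z i) (zm t y')).comp
            (t • ContinuousLinearMap.id ℝ (Fin n → ℝ)))‖
        ≤ ‖ω (zm t y') i‖ + ρ * ‖fderiv ℝ (fun w => ω w i) (zm t y')‖ := by
      intro i
      refine le_trans (norm_add_le _ _) ?_
      gcongr
      · calc ‖ω (zm t y') i • (ContinuousLinearMap.proj i : (Fin n → ℝ) →L[ℝ] ℝ)‖
            ≤ ‖ω (zm t y') i‖ * ‖(ContinuousLinearMap.proj i : (Fin n → ℝ) →L[ℝ] ℝ)‖ :=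
              ContinuousLinearMap.opNorm_smul_le _ _
        _ ≤ ‖ω (zm t y') i‖ * 1 :=
              mul_le_mul_of_nonneg_left (norm_proj_le_one i) (norm_nonneg _)
        _ = ‖ω (zm t y') i‖ := mul_one _
      · calc ‖(y' i - x i) • ((fderiv ℝ (fun z => ω z i) (zm t y')).comp
              (t • ContinuousLinearMap.id ℝ (Fin n → ℝ)))‖
            ≤ ‖y' i - x i‖ * ‖(fderiv ℝ (fun z => ω z i) (zm t y')).comp
              (t • ContinuousLinearMap.id ℝ (Fin n → ℝ))‖ :=
              ContinuousLinearMap.opNorm_smul_le _ _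
        _ ≤ ‖y' i - x i‖ * (‖fderiv ℝ (fun z => ω z i) (zm t y')‖
                * ‖t • ContinuousLinearMap.id ℝ (Fin n → ℝ)‖) := by
              exact mul_le_mul_of_nonneg_left
                (ContinuousLinearMap.opNorm_comp_le _ _) (norm_nonneg _)
        _ ≤ ρ * (‖fderiv ℝ (fun z => ω z i) (zm t y')‖ * 1) := by
              apply mul_le_mul
              · calc ‖y' i - x i‖ ≤ ‖y' - x‖ := by
                      simpa using norm_le_pi_norm (y' - x) i
                  _ ≤ ρ := by rw [← dist_eq_norm]; exact hy'
              · apply mul_le_mul_of_nonneg_left _ (norm_nonneg _)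
                calc ‖t • ContinuousLinearMap.id ℝ (Fin n → ℝ)‖
                    ≤ ‖t‖ * ‖ContinuousLinearMap.id ℝ (Fin n → ℝ)‖ :=
                      ContinuousLinearMap.opNorm_smul_le _ _
                _ ≤ 1 * 1 := by
                      rw [Real.norm_eq_abs, abs_of_nonneg ht.1]
                      apply mul_le_mul ht.2 (ContinuousLinearMap.norm_id_le) (norm_nonneg _)
                        zero_le_one
                _ = 1 := one_mul _
              · positivity
              · exact hρnonneg
        _ = ρ * ‖fderiv ℝ (fun w => ω w i) (zm t y')‖ := by ring
    calc ∑ i, ‖ω (zm t y') i • (ContinuousLinearMap.proj i : (Fin n → ℝ) →L[ℝ] ℝ)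
        + (y' i - x i) • ((fderiv ℝ (fun z => ω z i) (zm t y')).comp
            (t • ContinuousLinearMap.id ℝ (Fin n → ℝ)))‖
        ≤ ∑ i, (‖ω (zm t y') i‖ + ρ * ‖fderiv ℝ (fun w => ω w i) (zm t y')‖) :=
          Finset.sum_le_sum (fun i _ => key i)
    _ = ∑ i, ‖ω (zm t y') i‖ + ρ * ∑ i, ‖fderiv ℝ (fun w => ω w i) (zm t y')‖ := by
          rw [Finset.sum_add_distrib, Finset.mul_sum]
    _ ≤ M := le_trans (le_abs_self _) (hM _ hz)
  -- apply the dominated differentiation theorem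
  have hIoc_subset : Set.uIoc (0:ℝ) 1 ⊆ Set.Icc (0:ℝ) 1 := by
    rw [Set.uIoc_of_le (by norm_num : (0:ℝ) ≤ 1)]
    exact Set.Ioc_subset_Icc_self
  have hderiv_main : HasFDerivAt
      (fun y' => ∫ t in (0:ℝ)..1, ∑ i, ω (x + t • (y' - x)) i * (y' i - x i))
      (∫ t in (0:ℝ)..1, F' y t) y := by
    apply intervalIntegral.hasFDerivAt_integral_of_dominated_of_fderiv_le
      (F := fun y' t => ∑ i, ω (zm t y') i * (y' i - x i))
      (F' := F') (bound := fun _ => M) (s := Metric.ball y r) (Metric.ball_mem_nhds y hrpos)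
    · filter_upwards [Metric.ball_mem_nhds y hrpos] with y' hy'
      exact ((hFcont y' (hball_dist y' hy')).mono hIoc_subset).aestronglyMeasurable
        measurableSet_uIoc
    · exact ((hFcont y hyρ).mono (by
        rw [Set.uIcc_of_le (by norm_num : (0:ℝ) ≤ 1)])).intervalIntegrable
    · exact ((hF'cont y hyρ).mono hIoc_subset).aestronglyMeasurable measurableSet_uIoc
    · filter_upwards with t
      intro ht y' hy'
      exact hbound t (hIoc_subset ht) y' (hball_dist y' hy')
    · exact intervalIntegrable_const
    · filter_upwards with t
      intro ht y' hy'
      exact hdiff t (hIoc_subset ht) y' (hball_dist y' hy')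
  -- identify the derivative
  have hF'int : IntervalIntegrable (fun t => F' y t) MeasureTheory.volume 0 1 :=
    ((hF'cont y hyρ).mono (by
      rw [Set.uIcc_of_le (by norm_num : (0:ℝ) ≤ 1)])).intervalIntegrable
  have hkey : (∫ t in (0:ℝ)..1, F' y t)
      = ∑ i, ω y i • (ContinuousLinearMap.proj i : (Fin n → ℝ) →L[ℝ] ℝ) := by
    apply ContinuousLinearMap.coe_injective
    apply Module.Basis.ext (Pi.basisFun ℝ (Fin n))
    intro k
    have hbasis : (Pi.basisFun ℝ (Fin n)) k = Pi.single k (1:ℝ) := by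
      simp [Pi.basisFun_apply]
    rw [hbasis]
    have hLHS : (∫ t in (0:ℝ)..1, F' y t) (Pi.single k (1:ℝ))
        = ∫ t in (0:ℝ)..1, (F' y t) (Pi.single k (1:ℝ)) :=
      ContinuousLinearMap.intervalIntegral_apply hF'int _
    have hRHS : (∑ i, ω y i • (ContinuousLinearMap.proj i : (Fin n → ℝ) →L[ℝ] ℝ))
        (Pi.single k (1:ℝ)) = ω y k := by
      rw [ContinuousLinearMap.sum_apply]
      rw [Finset.sum_eq_single k]
      · simp
      · intro i _ hik
        simp [Pi.single_apply, hik.symm]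
      · simp
    show (∫ t in (0:ℝ)..1, F' y t) (Pi.single k (1:ℝ))
        = (∑ i, ω y i • (ContinuousLinearMap.proj i : (Fin n → ℝ) →L[ℝ] ℝ))
          (Pi.single k (1:ℝ))
    rw [hLHS, hRHS]
    -- now the scalar FTC computation
    set G' : ℝ → ℝ := fun t =>
      ω (zm t y) k + t * (fderiv ℝ (fun w => ω w k) (zm t y)) (y - x) with hG'
    have happly : ∀ t ∈ Set.Icc (0:ℝ) 1, (F' y t) (Pi.single k (1:ℝ)) = G' t := by
      intro t ht
      have hzUt : zm t y ∈ U := hzU t ht y hyρ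
      rw [hF']
      rw [ContinuousLinearMap.sum_apply]
      have hterm : ∀ i, (ω (zm t y) i • (ContinuousLinearMap.proj i : (Fin n → ℝ) →L[ℝ] ℝ)
          + (y i - x i) • ((fderiv ℝ (fun z => ω z i) (zm t y)).comp
              (t • ContinuousLinearMap.id ℝ (Fin n → ℝ)))) (Pi.single k (1:ℝ))
          = ω (zm t y) i * (Pi.single k (1:ℝ) : Fin n → ℝ) i
            + (y i - x i) * (t * pd (fun z => ω z i) k (zm t y)) := by
        intro i
        rw [ContinuousLinearMap.add_apply, ContinuousLinearMap.smul_apply,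
          ContinuousLinearMap.smul_apply, ContinuousLinearMap.proj_apply,
          ContinuousLinearMap.comp_apply, ContinuousLinearMap.smul_apply,
          ContinuousLinearMap.id_apply, _root_.map_smul]
        simp only [smul_eq_mul, pd]
      rw [Finset.sum_congr rfl (fun i _ => hterm i)]
      rw [Finset.sum_add_distrib]
      have h1 : ∑ i, ω (zm t y) i * (Pi.single k (1:ℝ) : Fin n → ℝ) i = ω (zm t y) k := by
        rw [Finset.sum_eq_single k]
        · simp
        · intro i _ hik
          simp [Pi.single_apply, hik.symm]
        · simp
      have h2 : ∑ i, (y i - x i) * (t * pd (fun z => ω z i) k (zm t y))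
          = t * (fderiv ℝ (fun w => ω w k) (zm t y)) (y - x) := by
        rw [clm_apply_eq_sum (fderiv ℝ (fun w => ω w k) (zm t y)) (y - x)]
        rw [Finset.mul_sum]
        congr 1
        funext i
        rw [hclosed (zm t y) hzUt i k]
        have : (fderiv ℝ (fun w => ω w k) (zm t y)) (Pi.single i 1)
            = pd (fun z => ω z k) i (zm t y) := rfl
        rw [this]
        simp only [Pi.sub_apply]
        ring
      rw [h1, h2, hG']
    have hG'deriv : ∀ t ∈ Set.uIcc (0:ℝ) 1,
        HasDerivAt (fun s => s * ω (zm s y) k) (G' t) t := by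
      intro t ht
      rw [Set.uIcc_of_le (by norm_num : (0:ℝ) ≤ 1)] at ht
      have hzUt : zm t y ∈ U := hzU t ht y hyρ
      have hz' : HasDerivAt (fun s : ℝ => zm s y) (y - x) t := by
        have : HasDerivAt (fun s : ℝ => s • (y - x)) ((1:ℝ) • (y - x)) t :=
          (hasDerivAt_id t).smul_const (y - x)
        simpa [hzm] using this.const_add x
      have hωk : HasFDerivAt (fun z => ω z k)
          (fderiv ℝ (fun z => ω z k) (zm t y)) (zm t y) :=
        (((hω_diff k) (zm t y) hzUt).differentiableAt (hU.mem_nhds hzUt)).hasFDerivAt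
      have hωz : HasDerivAt (fun s => ω (zm s y) k)
          ((fderiv ℝ (fun z => ω z k) (zm t y)) (y - x)) t :=
        hωk.comp_hasDerivAt (l := fun z => ω z k) t hz'
      have := (hasDerivAt_id t).fun_mul hωz
      simpa [hG'] using this
    have hG'int : IntervalIntegrable G' MeasureTheory.volume 0 1 := by
      apply ContinuousOn.intervalIntegrable
      rw [Set.uIcc_of_le (by norm_num : (0:ℝ) ≤ 1)]
      have hzcont : ContinuousOn (fun t => zm t y) (Set.Icc (0:ℝ) 1) := by fun_prop
      have hmem : ∀ t ∈ Set.Icc (0:ℝ) 1, zm t y ∈ U := fun t ht => hzU t ht y hyρ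
      apply ContinuousOn.add
      · exact (hω_cont k).comp hzcont hmem
      · exact continuousOn_id.mul
          ((((hω_fcont k).comp hzcont hmem)).clm_apply continuousOn_const)
    have hFTC : ∫ t in (0:ℝ)..1, G' t = ω y k := by
      rw [intervalIntegral.integral_eq_sub_of_hasDerivAt hG'deriv hG'int]
      have h1 : zm 1 y = y := by
        simp [hzm]
      simp [h1]
    rw [intervalIntegral.integral_congr (g := G') ?_, hFTC]
    intro t ht
    rw [Set.uIcc_of_le (by norm_num : (0:ℝ) ≤ 1)] at ht
    exact happly t ht
  rw [hkey] at hderiv_main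
  exact hderiv_main

end Poincare

section Smoothness

variable {n : ℕ}

lemma contDiffOn_pd {f : (Fin n → ℝ) → ℝ} {U : Set (Fin n → ℝ)} (hU : IsOpen U)
    (hf : ContDiffOn ℝ (⊤ : ℕ∞) f U) (k : Fin n) : ContDiffOn ℝ (⊤ : ℕ∞) (pd f k) U :=
  (hf.fderiv_of_isOpen hU (by simp)).clm_apply contDiffOn_const

lemma contDiffOn_christoffel {g ginv : (Fin n → ℝ) → Matrix (Fin n) (Fin n) ℝ}
    {U : Set (Fin n → ℝ)} (hU : IsOpen U)
    (hg : ∀ i j, ContDiffOn ℝ (⊤ : ℕ∞) (fun y => g y i j) U)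
    (hginv : ∀ i j, ContDiffOn ℝ (⊤ : ℕ∞) (fun y => ginv y i j) U)
    (i j k : Fin n) : ContDiffOn ℝ (⊤ : ℕ∞) (fun y => christoffel g ginv y i j k) U := by
  unfold christoffel
  apply ContDiffOn.mul contDiffOn_const
  apply ContDiffOn.sum
  intro p _
  exact (hginv i p).mul (((contDiffOn_pd hU (hg p j) k).add
    (contDiffOn_pd hU (hg p k) j)).sub (contDiffOn_pd hU (hg j k) p))

lemma contDiffOn_thomas {Γ : (Fin n → ℝ) → Fin n → Fin n → Fin n → ℝ}
    {U : Set (Fin n → ℝ)}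
    (hΓ : ∀ i j k, ContDiffOn ℝ (⊤ : ℕ∞) (fun y => Γ y i j k) U)
    (i j k : Fin n) : ContDiffOn ℝ (⊤ : ℕ∞) (fun y => thomas Γ y i j k) U := by
  unfold thomas
  apply ContDiffOn.sub
  apply ContDiffOn.sub
  · exact hΓ i j k
  · exact contDiffOn_const.mul (ContDiffOn.sum (fun p _ => hΓ p p k))
  · exact contDiffOn_const.mul (ContDiffOn.sum (fun p _ => hΓ p p j))

lemma contDiffOn_lowT {g ginv : (Fin n → ℝ) → Matrix (Fin n) (Fin n) ℝ}
    {Γ : (Fin n → ℝ) → Fin n → Fin n → Fin n → ℝ}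
    {U : Set (Fin n → ℝ)} (hU : IsOpen U)
    (hg : ∀ i j, ContDiffOn ℝ (⊤ : ℕ∞) (fun y => g y i j) U)
    (hginv : ∀ i j, ContDiffOn ℝ (⊤ : ℕ∞) (fun y => ginv y i j) U)
    (hΓ : ∀ i j k, ContDiffOn ℝ (⊤ : ℕ∞) (fun y => Γ y i j k) U)
    (i : Fin n) :
    ContDiffOn ℝ (⊤ : ℕ∞) (fun y => lowT g ginv (compatT g ginv Γ) y i) U := by
  have hcompat : ∀ i j k, ContDiffOn ℝ (⊤ : ℕ∞) (fun y => compatT g ginv Γ y i j k) U := by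
    intro i j k
    exact (contDiffOn_thomas (contDiffOn_christoffel hU hg hginv) i j k).sub
      (contDiffOn_thomas hΓ i j k)
  have hupT : ∀ i, ContDiffOn ℝ (⊤ : ℕ∞) (fun y => upT ginv (compatT g ginv Γ) y i) U := by
    intro i
    unfold upT
    apply ContDiffOn.mul contDiffOn_const
    exact ContDiffOn.sum (fun j _ => ContDiffOn.sum (fun k _ =>
      (hginv j k).mul (hcompat i j k)))
  unfold lowT
  exact ContDiffOn.sum (fun j _ => (hg i j).mul (hupT j))

end Smoothness

set_option maxHeartbeats 2000000 in
set_option synthInstance.maxHeartbeats 400000 in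
/-- local sufficiency in the main theorem: if conditions (A) and (B) hold on `U`,
then around each point of `U` there is a smooth `φ` such that the Levi-Civita connection of
`e^{2φ}g` is projectively equivalent to `Γ`. -/
theorem compatibility_locally_sufficient {n : ℕ} (hn : 2 ≤ n)
    (U : Set (Fin n → ℝ)) (hU : IsOpen U)
    (g ginv : (Fin n → ℝ) → Matrix (Fin n) (Fin n) ℝ)
    (hg_smooth : ∀ i j, ContDiffOn ℝ (⊤ : ℕ∞) (fun y => g y i j) U)
    (hginv_smooth : ∀ i j, ContDiffOn ℝ (⊤ : ℕ∞) (fun y => ginv y i j) U)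
    (hg_symm : ∀ x ∈ U, (g x).IsSymm)
    (hg_inv : ∀ x ∈ U, g x * ginv x = 1)
    (Γ : (Fin n → ℝ) → Fin n → Fin n → Fin n → ℝ)
    (hΓ_smooth : ∀ i j k, ContDiffOn ℝ (⊤ : ℕ∞) (fun y => Γ y i j k) U)
    (hΓ_symm : ∀ x ∈ U, ∀ i j k, Γ x i j k = Γ x i k j)
    (hA : ∀ x ∈ U, ∀ i j k,
      compatT g ginv Γ x i j k - g x j k * upT ginv (compatT g ginv Γ) x i
        + (1 / (n + 1 : ℝ)) * kd i j * lowT g ginv (compatT g ginv Γ) x k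
        + (1 / (n + 1 : ℝ)) * kd i k * lowT g ginv (compatT g ginv Γ) x j = 0)
    (hB : ∀ x ∈ U, ∀ i j,
      pd (fun y => lowT g ginv (compatT g ginv Γ) y i) j x
        - pd (fun y => lowT g ginv (compatT g ginv Γ) y j) i x = 0) :
    ∀ x ∈ U, ∃ V : Set (Fin n → ℝ), IsOpen V ∧ x ∈ V ∧ V ⊆ U ∧
      ∃ φ : (Fin n → ℝ) → ℝ, ContDiffOn ℝ (⊤ : ℕ∞) φ V ∧
        ∀ y ∈ V, ∀ i j k,
          thomas (christoffel (confRescale φ g) (confRescale (fun z => -φ z) ginv)) y i j k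
            = thomas Γ y i j k := by
  intro x hx
  have hω_smooth : ∀ i, ContDiffOn ℝ (⊤ : ℕ∞) (fun y => lowT g ginv (compatT g ginv Γ) y i) U :=
    fun i => contDiffOn_lowT hU hg_smooth hginv_smooth hΓ_smooth i
  have hclosed : ∀ y ∈ U, ∀ i j,
      pd (fun z => lowT g ginv (compatT g ginv Γ) z i) j y
        = pd (fun z => lowT g ginv (compatT g ginv Γ) z j) i y := by
    intro y hy i j
    have h := hB y hy i j
    linarith
  obtain ⟨ε, hεpos, hεU, φ, hφ⟩ := exists_potential hU
    (fun i => (hω_smooth i).continuousOn)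
    (fun i => (hω_smooth i).differentiableOn (by simp))
    (fun i => (hω_smooth i).continuousOn_fderiv_of_isOpen hU (by simp))
    hclosed hx
  refine ⟨Metric.ball x ε, Metric.isOpen_ball, Metric.mem_ball_self hεpos, hεU, φ, ?_, ?_⟩
  · -- analyticity of φ
    have hA_smooth : ContDiffOn ℝ (⊤ : ℕ∞)
        (fun y => ∑ i, lowT g ginv (compatT g ginv Γ) y i
          • (ContinuousLinearMap.proj i : (Fin n → ℝ) →L[ℝ] ℝ)) U :=
      ContDiffOn.sum (fun i _ => (hω_smooth i).smul contDiffOn_const)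
    have hfd : ContDiffOn ℝ (⊤ : ℕ∞) (fderiv ℝ φ) (Metric.ball x ε) :=
      (hA_smooth.mono hεU).congr (fun y hy => (hφ y hy).fderiv)
    exact (contDiffOn_infty_iff_fderiv_of_isOpen Metric.isOpen_ball).2
      ⟨fun y hy => (hφ y hy).differentiableAt.differentiableWithinAt, hfd⟩
  · -- the pointwise computation
    intro y hy i j k
    have hyU : y ∈ U := hεU hy
    have hφy := hφ y hy
    -- evaluation of the derivative CLM on basis vectors
    have hAeval : ∀ (m : Fin n),
        (∑ i, lowT g ginv (compatT g ginv Γ) y i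
          • (ContinuousLinearMap.proj i : (Fin n → ℝ) →L[ℝ] ℝ)) (Pi.single m 1)
          = lowT g ginv (compatT g ginv Γ) y m := by
      intro m
      rw [ContinuousLinearMap.sum_apply]
      rw [Finset.sum_eq_single m]
      · simp
      · intro p _ hpm
        simp [Pi.single_apply, hpm.symm]
      · simp
    have hψ : ∀ m, pd φ m y = lowT g ginv (compatT g ginv Γ) y m := by
      intro m
      rw [pd, hφy.fderiv]
      exact hAeval m
    -- matrix identities
    have hmul2 : ginv y * g y = 1 := mul_eq_one_comm.1 (hg_inv y hyU)
    have hginvg : ∀ a b, (∑ p, ginv y a p * g y p b) = kd a b := by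
      intro a b
      have h := congrFun (congrFun hmul2 a) b
      rw [Matrix.mul_apply] at h
      rw [h, Matrix.one_apply]
      rfl
    have hgginv : ∀ a b, (∑ p, g y a p * ginv y p b) = kd a b := by
      intro a b
      have h := congrFun (congrFun (hg_inv y hyU) a) b
      rw [Matrix.mul_apply] at h
      rw [h, Matrix.one_apply]
      rfl
    have hgsymm : ∀ a b, g y a b = g y b a := by
      intro a b
      have h := hg_symm y hyU
      have h2 := congrFun (congrFun h b) a
      rw [Matrix.transpose_apply] at h2
      exact h2
    -- derivative of the conformal factor times metric
    have hgdiff : ∀ p q, DifferentiableAt ℝ (fun z => g z p q) y := fun p q =>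
      ((hg_smooth p q).differentiableOn (by simp)).differentiableAt (hU.mem_nhds hyU)
    have hexp : HasFDerivAt (fun z => Real.exp (2 * φ z))
        (Real.exp (2 * φ y) • ((2:ℝ) • (∑ i, lowT g ginv (compatT g ginv Γ) y i
          • (ContinuousLinearMap.proj i : (Fin n → ℝ) →L[ℝ] ℝ)))) y :=
      (hφy.const_mul (2:ℝ)).exp
    have hpdr : ∀ p q m, pd (fun z => Real.exp (2 * φ z) * g z p q) m y
        = Real.exp (2 * φ y) * (2 * lowT g ginv (compatT g ginv Γ) y m * g y p q
            + pd (fun z => g z p q) m y) := by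
      intro p q m
      have hmul := hexp.fun_mul (hgdiff p q).hasFDerivAt
      rw [pd, hmul.fderiv]
      simp only [ContinuousLinearMap.add_apply, ContinuousLinearMap.smul_apply, smul_eq_mul]
      rw [hAeval m]
      rw [show (fderiv ℝ (fun z => g z p q) y) (Pi.single m 1)
        = pd (fun z => g z p q) m y from rfl]
      ring
    -- χ and its identification with upT
    have hχ : ∀ i, (∑ p, ginv y i p * lowT g ginv (compatT g ginv Γ) y p)
        = upT ginv (compatT g ginv Γ) y i := by
      intro i
      have s1 : ∀ p, ginv y i p * lowT g ginv (compatT g ginv Γ) y p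
          = ∑ q, ginv y i p * (g y p q * upT ginv (compatT g ginv Γ) y q) := by
        intro p
        rw [show lowT g ginv (compatT g ginv Γ) y p
          = ∑ q, g y p q * upT ginv (compatT g ginv Γ) y q from rfl, Finset.mul_sum]
      rw [Finset.sum_congr rfl (fun p _ => s1 p), Finset.sum_comm]
      have s2 : ∀ q, (∑ p, ginv y i p * (g y p q * upT ginv (compatT g ginv Γ) y q))
          = kd i q * upT ginv (compatT g ginv Γ) y q := by
        intro q
        rw [← hginvg i q, Finset.sum_mul]
        exact Finset.sum_congr rfl (fun p _ => by ring)
      rw [Finset.sum_congr rfl (fun q _ => s2 q)]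
      rw [Finset.sum_eq_single i]
      · simp [kd]
      · intro q _ hqi
        simp [kd, hqi.symm]
      · simp
    -- expansion of the rescaled Christoffel symbols
    have hchr : ∀ i j k,
        christoffel (confRescale φ g) (confRescale (fun z => -φ z) ginv) y i j k
          = christoffel g ginv y i j k
            + (kd i j * lowT g ginv (compatT g ginv Γ) y k
              + kd i k * lowT g ginv (compatT g ginv Γ) y j
              - g y j k * (∑ p, ginv y i p * lowT g ginv (compatT g ginv Γ) y p)) := by
      intro i j k
      show (1 / 2) * ∑ p, (Real.exp (2 * -φ y) • ginv y) i p *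
          (pd (fun z => (Real.exp (2 * φ z) • g z) p j) k y
            + pd (fun z => (Real.exp (2 * φ z) • g z) p k) j y
            - pd (fun z => (Real.exp (2 * φ z) • g z) j k) p y) = _
      have hfun : ∀ p q, (fun z => (Real.exp (2 * φ z) • g z) p q)
          = fun z => Real.exp (2 * φ z) * g z p q := by
        intro p q; funext z; rw [Matrix.smul_apply, smul_eq_mul]
      have hsummand : ∀ p, (Real.exp (2 * -φ y) • ginv y) i p *
          (pd (fun z => (Real.exp (2 * φ z) • g z) p j) k y
            + pd (fun z => (Real.exp (2 * φ z) • g z) p k) j y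
            - pd (fun z => (Real.exp (2 * φ z) • g z) j k) p y)
          = ginv y i p * (pd (fun z => g z p j) k y + pd (fun z => g z p k) j y
              - pd (fun z => g z j k) p y)
            + 2 * lowT g ginv (compatT g ginv Γ) y k * (ginv y i p * g y p j)
            + 2 * lowT g ginv (compatT g ginv Γ) y j * (ginv y i p * g y p k)
            - 2 * g y j k * (ginv y i p * lowT g ginv (compatT g ginv Γ) y p) := by
        intro p
        rw [hfun p j, hfun p k, hfun j k, hpdr, hpdr, hpdr]
        rw [Matrix.smul_apply, smul_eq_mul]
        rw [show (2 : ℝ) * -φ y = -(2 * φ y) by ring, Real.exp_neg]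
        have hexpne : Real.exp (2 * φ y) ≠ 0 := Real.exp_ne_zero _
        field_simp
        ring
      have hgc : christoffel g ginv y i j k
          = (1 / 2) * ∑ p, ginv y i p * (pd (fun z => g z p j) k y
              + pd (fun z => g z p k) j y - pd (fun z => g z j k) p y) := rfl
      rw [Finset.sum_congr rfl (fun p _ => hsummand p)]
      rw [Finset.sum_sub_distrib, Finset.sum_add_distrib, Finset.sum_add_distrib,
        ← Finset.mul_sum, ← Finset.mul_sum, ← Finset.mul_sum, hginvg, hginvg, hgc]
      ring
    -- trace of the correction term
    have htrace : ∀ m,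
        (∑ p, christoffel (confRescale φ g) (confRescale (fun z => -φ z) ginv) y p p m)
          = (∑ p, christoffel g ginv y p p m)
            + (n : ℝ) * lowT g ginv (compatT g ginv Γ) y m := by
      intro m
      rw [Finset.sum_congr rfl (fun p _ => hchr p p m)]
      rw [Finset.sum_add_distrib]
      congr 1
      have e1 : (∑ p : Fin n, kd p p * lowT g ginv (compatT g ginv Γ) y m)
          = (n : ℝ) * lowT g ginv (compatT g ginv Γ) y m := by
        have : ∀ p : Fin n, kd p p * lowT g ginv (compatT g ginv Γ) y m
            = lowT g ginv (compatT g ginv Γ) y m := by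
          intro p; simp [kd]
        rw [Finset.sum_congr rfl (fun p _ => this p), Finset.sum_const, Finset.card_univ,
          Fintype.card_fin, nsmul_eq_mul]
      have e2 : (∑ p, kd p m * lowT g ginv (compatT g ginv Γ) y p)
          = lowT g ginv (compatT g ginv Γ) y m := by
        rw [Finset.sum_eq_single m]
        · simp [kd]
        · intro q _ hqm; simp [kd, hqm]
        · simp
      have e3 : (∑ p, g y p m * (∑ q, ginv y p q * lowT g ginv (compatT g ginv Γ) y q))
          = lowT g ginv (compatT g ginv Γ) y m := by
        have s1 : ∀ p, g y p m * (∑ q, ginv y p q * lowT g ginv (compatT g ginv Γ) y q)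
            = ∑ q, g y m p * ginv y p q * lowT g ginv (compatT g ginv Γ) y q := by
          intro p
          rw [Finset.mul_sum]
          exact Finset.sum_congr rfl (fun q _ => by rw [hgsymm p m]; ring)
        rw [Finset.sum_congr rfl (fun p _ => s1 p), Finset.sum_comm]
        have s2 : ∀ q, (∑ p, g y m p * ginv y p q * lowT g ginv (compatT g ginv Γ) y q)
            = kd m q * lowT g ginv (compatT g ginv Γ) y q := by
          intro q
          rw [← hgginv m q, Finset.sum_mul]
        rw [Finset.sum_congr rfl (fun q _ => s2 q)]
        rw [Finset.sum_eq_single m]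
        · simp [kd]
        · intro q _ hqm
          simp [kd, hqm.symm]
        · simp
      rw [Finset.sum_sub_distrib, Finset.sum_add_distrib, e1, e2, e3]
      ring
    -- assemble
    have hthomas : thomas (christoffel (confRescale φ g)
          (confRescale (fun z => -φ z) ginv)) y i j k
        = thomas (christoffel g ginv) y i j k
          + (kd i j * lowT g ginv (compatT g ginv Γ) y k
            + kd i k * lowT g ginv (compatT g ginv Γ) y j
            - g y j k * (∑ p, ginv y i p * lowT g ginv (compatT g ginv Γ) y p))
          - (1 / ((n : ℝ) + 1)) * kd i j * ((n : ℝ) * lowT g ginv (compatT g ginv Γ) y k)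
          - (1 / ((n : ℝ) + 1)) * kd i k * ((n : ℝ) * lowT g ginv (compatT g ginv Γ) y j) := by
      have hth2 : thomas (christoffel (confRescale φ g)
            (confRescale (fun z => -φ z) ginv)) y i j k
          = christoffel (confRescale φ g) (confRescale (fun z => -φ z) ginv) y i j k
            - (1 / (n + 1 : ℝ)) * kd i j *
              (∑ p, christoffel (confRescale φ g) (confRescale (fun z => -φ z) ginv) y p p k)
            - (1 / (n + 1 : ℝ)) * kd i k *
              (∑ p, christoffel (confRescale φ g) (confRescale (fun z => -φ z) ginv) y p p j) :=
        rfl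
      have hth1 : thomas (christoffel g ginv) y i j k
          = christoffel g ginv y i j k
            - (1 / (n + 1 : ℝ)) * kd i j * (∑ p, christoffel g ginv y p p k)
            - (1 / (n + 1 : ℝ)) * kd i k * (∑ p, christoffel g ginv y p p j) := rfl
      rw [hth2, hchr i j k, htrace k, htrace j, hth1]
      ring
    have hAy := hA y hyU i j k
    rw [← hχ i] at hAy
    have hcompat : compatT g ginv Γ y i j k
        = thomas (christoffel g ginv) y i j k - thomas Γ y i j k := rfl
    rw [hcompat] at hAy
    have hc : (1 / ((n : ℝ) + 1)) * ((n : ℝ) + 1) = 1 := by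
      have : ((n : ℝ) + 1) ≠ 0 := by positivity
      field_simp
    rw [hthomas]
    linear_combination hAy - (kd i j * lowT g ginv (compatT g ginv Γ) y k
      + kd i k * lowT g ginv (compatT g ginv Γ) y j) * hc
end

section
/- (Algebraic condition in the example.) Let n ≥ 2, let U ⊆ ℝⁿ be open, let g : U → Matrix (Fin n) (Fin n) ℝ be smooth with values in symmetric invertible matrices and smooth pointwise inverse g^{ij}, let S : U → ℝⁿ be a smooth vector field, and define Γ^i_{jk} = 𝓕^i_{jk}(g) − S^i g_{jk}. With T^i_{jk} = Π^i_{jk}(𝓕(g)) − Π^i_{jk}(Γ), T^i = ((n+1)/((n+2)(n−1))) g^{jk} T^i_{jk}, and T_i = g_{ij} T^j, one has T^i = S^i on all of U, and condition (A) T^i_{jk} − g_{jk} T^i + (1/(n+1)) δ^i_j T_k + (1/(n+1)) δ^i_k T_j = 0 holds identically on U. -/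
open scoped BigOperators

/-- algebraic condition in the example: for
`Γ^i_{jk} = 𝓕^i_{jk}(g) − S^i g_{jk}` one has `T^i = S^i` and the algebraic
condition (A) holds identically on `U`. -/
theorem algebraic_condition_example {n : ℕ} (hn : 2 ≤ n)
    (U : Set (Fin n → ℝ)) (hU : IsOpen U)
    (g ginv : (Fin n → ℝ) → Matrix (Fin n) (Fin n) ℝ)
    (hg_smooth : ∀ i j, ContDiffOn ℝ (⊤ : ℕ∞) (fun y => g y i j) U)
    (hginv_smooth : ∀ i j, ContDiffOn ℝ (⊤ : ℕ∞) (fun y => ginv y i j) U)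
    (hg_symm : ∀ x ∈ U, (g x).IsSymm)
    (hg_inv : ∀ x ∈ U, g x * ginv x = 1)
    (S : (Fin n → ℝ) → Fin n → ℝ) (hS : ∀ i, ContDiffOn ℝ (⊤ : ℕ∞) (fun y => S y i) U)
    (Γ : (Fin n → ℝ) → Fin n → Fin n → Fin n → ℝ)
    (hΓ : ∀ x ∈ U, ∀ i j k, Γ x i j k = christoffel g ginv x i j k - S x i * g x j k) :
    (∀ x ∈ U, ∀ i, upT ginv (compatT g ginv Γ) x i = S x i) ∧
    (∀ x ∈ U, ∀ i j k,
      compatT g ginv Γ x i j k - g x j k * upT ginv (compatT g ginv Γ) x i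
        + (1 / (n + 1 : ℝ)) * kd i j * lowT g ginv (compatT g ginv Γ) x k
        + (1 / (n + 1 : ℝ)) * kd i k * lowT g ginv (compatT g ginv Γ) x j = 0) := by
  -- explicit formula for the compatibility tensor
  have main : ∀ x ∈ U, ∀ i j k, compatT g ginv Γ x i j k =
      S x i * g x j k - (1 / (n + 1 : ℝ)) * kd i j * (∑ p, S x p * g x p k)
        - (1 / (n + 1 : ℝ)) * kd i k * (∑ p, S x p * g x p j) := by
    intro x hx i j k
    have hsΓ : ∀ b : Fin n, (∑ p, Γ x p p b)
        = (∑ p, christoffel g ginv x p p b) - ∑ p, S x p * g x p b := by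
      intro b
      rw [← Finset.sum_sub_distrib]
      exact Finset.sum_congr rfl fun p _ => hΓ x hx p p b
    simp only [compatT, thomas, hΓ x hx i j k, hsΓ]
    ring
  have hn1 : ((n : ℝ) + 1) ≠ 0 := by positivity
  have hn2 : ((n : ℝ) + 2) * ((n : ℝ) - 1) ≠ 0 := by
    have h2 : (2 : ℝ) ≤ (n : ℝ) := by exact_mod_cast hn
    have : (0 : ℝ) < ((n : ℝ) + 2) * ((n : ℝ) - 1) := by nlinarith
    linarith
  have hTup : ∀ x ∈ U, ∀ i, upT ginv (compatT g ginv Γ) x i = S x i := by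
    intro x hx i
    have h1 : g x * ginv x = 1 := hg_inv x hx
    have h2 : ginv x * g x = 1 := mul_eq_one_comm.mp h1
    have hsg : (g x).transpose = g x := hg_symm x hx
    have hsgi : (ginv x).transpose = ginv x := by
      calc (ginv x).transpose = (ginv x).transpose * (g x * ginv x) := by rw [h1, mul_one]
        _ = ((ginv x).transpose * (g x).transpose) * ginv x := by rw [hsg, mul_assoc]
        _ = (g x * ginv x).transpose * ginv x := by rw [Matrix.transpose_mul]
        _ = ginv x := by rw [h1, Matrix.transpose_one, one_mul]
    have hgg : ∀ p q, (∑ k, g x p k * ginv x k q) = kd p q := by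
      intro p q
      have := congrArg (fun M : Matrix (Fin n) (Fin n) ℝ => M p q) h1
      simpa [Matrix.mul_apply, Matrix.one_apply, kd] using this
    have higg : ∀ p q, (∑ k, ginv x p k * g x k q) = kd p q := by
      intro p q
      have := congrArg (fun M : Matrix (Fin n) (Fin n) ℝ => M p q) h2
      simpa [Matrix.mul_apply, Matrix.one_apply, kd] using this
    have hg_sym : ∀ p q, g x p q = g x q p := by
      intro p q
      have := congrArg (fun M : Matrix (Fin n) (Fin n) ℝ => M p q) hsg
      simpa [Matrix.transpose_apply] using this.symm
    have hgi_sym : ∀ p q, ginv x p q = ginv x q p := by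
      intro p q
      have := congrArg (fun M : Matrix (Fin n) (Fin n) ℝ => M p q) hsgi
      simpa [Matrix.transpose_apply] using this.symm
    have hA : (∑ j, ∑ k, ginv x j k * (S x i * g x j k)) = S x i * n := by
      have e : ∀ j : Fin n, (∑ k, ginv x j k * (S x i * g x j k))
          = S x i * (∑ k, ginv x j k * g x k j) := by
        intro j
        rw [Finset.mul_sum]
        exact Finset.sum_congr rfl fun k _ => by rw [hg_sym j k]; ring
      simp only [e, higg, kd, if_pos rfl]
      simp [Finset.sum_const, mul_comm]
    have hQ : ∀ m : Fin n, (∑ k, ginv x m k * (∑ p, S x p * g x p k)) = S x m := by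
      intro m
      have e : ∀ k : Fin n, ginv x m k * (∑ p, S x p * g x p k)
          = ∑ p, S x p * (g x p k * ginv x k m) := by
        intro k
        rw [Finset.mul_sum]
        exact Finset.sum_congr rfl fun p _ => by rw [hgi_sym m k]; ring
      simp only [e]
      rw [Finset.sum_comm]
      have : ∀ p : Fin n, (∑ k, S x p * (g x p k * ginv x k m)) = S x p * kd p m := by
        intro p
        rw [← Finset.mul_sum, hgg p m]
      simp only [this, kd]
      simp
    have hB : (∑ j, ∑ k, ginv x j k * kd i j * (∑ p, S x p * g x p k)) = S x i := by
      have e : ∀ j : Fin n, (∑ k, ginv x j k * kd i j * (∑ p, S x p * g x p k))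
          = kd i j * (∑ k, ginv x j k * (∑ p, S x p * g x p k)) := by
        intro j
        rw [Finset.mul_sum]
        exact Finset.sum_congr rfl fun k _ => by ring
      rw [Finset.sum_congr rfl fun j _ => e j]
      simp only [kd, ite_mul, one_mul, zero_mul, Finset.sum_ite_eq, Finset.mem_univ, if_true]
      exact hQ i
    have hC : (∑ j, ∑ k, ginv x j k * kd i k * (∑ p, S x p * g x p j)) = S x i := by
      rw [Finset.sum_comm]
      have e : ∀ k : Fin n, (∑ j, ginv x j k * kd i k * (∑ p, S x p * g x p j))
          = kd i k * (∑ j, ginv x k j * (∑ p, S x p * g x p j)) := by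
        intro k
        rw [Finset.mul_sum]
        exact Finset.sum_congr rfl fun j _ => by rw [hgi_sym j k]; ring
      rw [Finset.sum_congr rfl fun k _ => e k]
      simp only [kd, ite_mul, one_mul, zero_mul, Finset.sum_ite_eq, Finset.mem_univ, if_true]
      exact hQ i
    have hsum : (∑ j, ∑ k, ginv x j k * compatT g ginv Γ x i j k)
        = S x i * n - (1 / (n + 1 : ℝ)) * S x i - (1 / (n + 1 : ℝ)) * S x i := by
      have e : ∀ j k : Fin n, ginv x j k * compatT g ginv Γ x i j k
          = ginv x j k * (S x i * g x j k)
            - (1 / (n + 1 : ℝ)) * (ginv x j k * kd i j * (∑ p, S x p * g x p k))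
            - (1 / (n + 1 : ℝ)) * (ginv x j k * kd i k * (∑ p, S x p * g x p j)) := by
        intro j k
        rw [main x hx i j k]
        ring
      simp only [e, Finset.sum_sub_distrib, ← Finset.mul_sum]
      rw [hA, hB, hC]
    rw [upT, hsum]
    have hn3 : ((n : ℝ) - 1) ≠ 0 := (mul_ne_zero_iff.mp hn2).2
    have hn4 : ((n : ℝ) + 2) ≠ 0 := (mul_ne_zero_iff.mp hn2).1
    field_simp
    ring
  refine ⟨hTup, ?_⟩
  intro x hx i j k
  have hg_sym : ∀ p q, g x p q = g x q p := by
    intro p q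
    have := congrArg (fun M : Matrix (Fin n) (Fin n) ℝ => M p q) (hg_symm x hx)
    simpa [Matrix.transpose_apply] using this.symm
  have hlow : ∀ m : Fin n, lowT g ginv (compatT g ginv Γ) x m = ∑ p, S x p * g x p m := by
    intro m
    rw [lowT]
    exact Finset.sum_congr rfl fun p _ => by rw [hTup x hx p, hg_sym m p]; ring
  rw [main x hx i j k, hTup x hx i, hlow, hlow]
  ring
end

section
/- (Reconstruction of the conformal structure from light cones.) Let V be a finite-dimensional real vector space of dimension n ≥ 2, and let g and g' be nondegenerate symmetric bilinear forms on V, with g of indefinite signature (i.e. there exist vectors v, w with g(v,v) > 0 and g(w,w) < 0). If g and g' have the same null cone, i.e. for every v ∈ V one has g(v,v) = 0 ⟺ g'(v,v) = 0, then there exists a nonzero constant c ∈ ℝ with g' = c·g. -/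
/-- Auxiliary: for an orthogonal pair (u positive, w negative), the null vectors
`αu ± βw` force `g' u w = 0` and proportionality of the diagonal values. -/
lemma aux_ortho_pair
    (V : Type*) [AddCommGroup V] [Module ℝ V]
    (g g' : LinearMap.BilinForm ℝ V)
    (hg_symm : ∀ v w, g v w = g w v) (hg'_symm : ∀ v w, g' v w = g' w v)
    (hcone : ∀ v, g v v = 0 ↔ g' v v = 0)
    (u w : V) (hu : 0 < g u u) (hw : g w w < 0) (huw : g u w = 0) :
    g' u w = 0 ∧ g' u u * g w w = g u u * g' w w := by
  set α := Real.sqrt (-(g w w)) with hα_def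
  set β := Real.sqrt (g u u) with hβ_def
  have hα2 : α ^ 2 = -(g w w) := Real.sq_sqrt (by linarith)
  have hβ2 : β ^ 2 = g u u := Real.sq_sqrt (by linarith)
  have hαpos : 0 < α := Real.sqrt_pos.mpr (by linarith)
  have hβpos : 0 < β := Real.sqrt_pos.mpr (by linarith)
  have hwu : g w u = 0 := by rw [← hg_symm]; exact huw
  have h1 : g (α • u + β • w) (α • u + β • w) = 0 := by
    simp only [map_add, map_smul, LinearMap.add_apply, LinearMap.smul_apply, smul_eq_mul]
    rw [huw, hwu]
    linear_combination (g u u) * hα2 + (g w w) * hβ2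
  have h2 : g (α • u - β • w) (α • u - β • w) = 0 := by
    simp only [map_sub, map_smul, LinearMap.sub_apply, LinearMap.smul_apply, smul_eq_mul]
    rw [huw, hwu]
    linear_combination (g u u) * hα2 + (g w w) * hβ2
  have h1' := (hcone _).mp h1
  have h2' := (hcone _).mp h2
  simp only [map_add, map_sub, map_smul, LinearMap.add_apply, LinearMap.sub_apply,
    LinearMap.smul_apply, smul_eq_mul] at h1' h2'
  have hwu' : g' w u = g' u w := hg'_symm w u
  rw [hwu'] at h1' h2'
  have h3 : 4 * (α * β) * g' u w = 0 := by linear_combination h1' - h2'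
  have hcross : g' u w = 0 := by
    have h4 : (4 : ℝ) * (α * β) ≠ 0 := by positivity
    rcases mul_eq_zero.mp h3 with h | h
    · exact absurd h h4
    · exact h
  rw [hcross] at h1' h2'
  refine ⟨hcross, ?_⟩
  linear_combination (g' u u) * hα2 + (g' w w) * hβ2 - (1/2) * h1' - (1/2) * h2'

/-- Auxiliary: for any positive u and negative w (not necessarily orthogonal),
the diagonal ratios agree. -/
lemma aux_key
    (V : Type*) [AddCommGroup V] [Module ℝ V]
    (g g' : LinearMap.BilinForm ℝ V)
    (hg_symm : ∀ v w, g v w = g w v) (hg'_symm : ∀ v w, g' v w = g' w v)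
    (hcone : ∀ v, g v v = 0 ↔ g' v v = 0)
    (u w : V) (hu : 0 < g u u) (hw : g w w < 0) :
    g' u u * g w w = g u u * g' w w := by
  set l : ℝ := g u w / g u u with hl_def
  have hguu : g u u ≠ 0 := ne_of_gt hu
  have hl : l * g u u = g u w := by rw [hl_def]; field_simp
  set w' : V := w - l • u with hw'_def
  have huw' : g u w' = 0 := by
    simp only [hw'_def, map_sub, map_smul, smul_eq_mul]
    linear_combination -hl
  have hA : g w' w' = g w w - 2 * l * (g u w) + l ^ 2 * (g u u) := by
    simp only [hw'_def, map_sub, map_smul, LinearMap.sub_apply, LinearMap.smul_apply,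
      smul_eq_mul]
    rw [show g w u = g u w from hg_symm w u]
    ring
  have hB : g' w' w' = g' w w - 2 * l * (g' u w) + l ^ 2 * (g' u u) := by
    simp only [hw'_def, map_sub, map_smul, LinearMap.sub_apply, LinearMap.smul_apply,
      smul_eq_mul]
    rw [show g' w u = g' u w from hg'_symm w u]
    ring
  have hw'neg : g w' w' < 0 := by
    rw [hA]
    have h1 : g w w - 2 * l * g u w + l ^ 2 * g u u
        = g w w - (g u w) ^ 2 / g u u := by
      rw [hl_def]; field_simp; ring
    rw [h1]
    have : 0 ≤ (g u w) ^ 2 / g u u := by positivity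
    linarith
  obtain ⟨hc, hprop⟩ := aux_ortho_pair V g g' hg_symm hg'_symm hcone u w' hu hw'neg huw'
  rw [hA, hB] at hprop
  have hcE : g' u w = l * g' u u := by
    simp only [hw'_def, map_sub, map_smul, smul_eq_mul] at hc
    linarith
  linear_combination hprop - 2 * l * (g' u u) * hl - 2 * l * (g u u) * hcE

/-- reconstruction of the conformal structure from light cones: two nondegenerate
symmetric bilinear forms on a real vector space of dimension `≥ 2`, the first of indefinite
signature, having the same null cone, are proportional by a nonzero constant. -/
theorem same_null_cone_implies_proportional
    (V : Type*) [AddCommGroup V] [Module ℝ V] [FiniteDimensional ℝ V]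
    (hdim : 2 ≤ Module.finrank ℝ V)
    (g g' : LinearMap.BilinForm ℝ V)
    (hg_symm : ∀ v w, g v w = g w v) (hg'_symm : ∀ v w, g' v w = g' w v)
    (hg_nondeg : ∀ v, (∀ w, g v w = 0) → v = 0)
    (hg'_nondeg : ∀ v, (∀ w, g' v w = 0) → v = 0)
    (hg_indef_pos : ∃ v, 0 < g v v) (hg_indef_neg : ∃ w, g w w < 0)
    (hcone : ∀ v, g v v = 0 ↔ g' v v = 0) :
    ∃ c : ℝ, c ≠ 0 ∧ g' = c • g := by
  obtain ⟨u₀, hu₀⟩ := hg_indef_pos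
  obtain ⟨w₀, hw₀⟩ := hg_indef_neg
  have hgu₀ : g u₀ u₀ ≠ 0 := ne_of_gt hu₀
  have hgw₀ : g w₀ w₀ ≠ 0 := ne_of_lt hw₀
  have hg'u₀ : g' u₀ u₀ ≠ 0 := fun h => hgu₀ ((hcone u₀).mpr h)
  obtain ⟨c, hcne, hcu₀⟩ : ∃ c : ℝ, c ≠ 0 ∧ g' u₀ u₀ = c * g u₀ u₀ :=
    ⟨g' u₀ u₀ / g u₀ u₀, div_ne_zero hg'u₀ hgu₀, by field_simp⟩
  -- value on the fixed negative vector
  have hkey₀ := aux_key V g g' hg_symm hg'_symm hcone u₀ w₀ hu₀ hw₀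
  rw [hcu₀] at hkey₀
  have hcw₀ : g' w₀ w₀ = c * g w₀ w₀ :=
    mul_left_cancel₀ hgu₀
      (show g u₀ u₀ * g' w₀ w₀ = g u₀ u₀ * (c * g w₀ w₀) by linear_combination -hkey₀)
  -- quadratic forms are proportional
  have quad : ∀ v, g' v v = c * g v v := by
    intro v
    rcases lt_trichotomy (g v v) 0 with hv | hv | hv
    · have hk := aux_key V g g' hg_symm hg'_symm hcone u₀ v hu₀ hv
      rw [hcu₀] at hk
      exact mul_left_cancel₀ hgu₀
        (show g u₀ u₀ * g' v v = g u₀ u₀ * (c * g v v) by linear_combination -hk)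
    · rw [hv, (hcone v).mp hv, mul_zero]
    · have hk := aux_key V g g' hg_symm hg'_symm hcone v w₀ hv hw₀
      rw [hcw₀] at hk
      exact mul_right_cancel₀ hgw₀
        (show g' v v * g w₀ w₀ = c * g v v * g w₀ w₀ by linear_combination hk)
  -- polarization
  refine ⟨c, hcne, ?_⟩
  apply LinearMap.ext; intro v
  apply LinearMap.ext; intro w
  have hq := quad (v + w)
  simp only [map_add, LinearMap.add_apply] at hq
  rw [quad v, quad w, hg_symm w v, hg'_symm w v] at hq
  have : g' v w = c * g v w := by linarith
  simpa [smul_eq_mul] using this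
end
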